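/- arXiv:2506.04859 — 4 statements merged into one kernel-verified Lean document; each statement's English description precedes it below -/
import Mathlib

section
/- Let x ∈ ℝ be nonzero and 0 < γ < x². Define L(w, μ, σ) = (1/2)[ log(2πγ) + (x − w(1−σ)μ)²/γ + w²σ²(1−σ)²/γ + σ² − log σ² + μ² − 1 ] for w, μ ∈ ℝ and σ ∈ (0,1). Then every critical point of L with σ ∈ (0,1) and wμ ≠ 0 satisfies σ² = γ/x² and μ² = 1 − γ/x². -/
open Real

/-- Every critical point of the 1-D VAEase loss with `σ ∈ (0,1)` and `wμ ≠ 0`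
satisfies `σ² = γ/x²` and `μ² = 1 − γ/x²`. -/
theorem stmt_2 (x γ : ℝ) (hx : x ≠ 0) (hγ : 0 < γ) (hγx : γ < x ^ 2)
    (L : ℝ → ℝ → ℝ → ℝ)
    (hL : ∀ w μ σ, L w μ σ = (1 / 2) * (Real.log (2 * π * γ)
        + (x - w * (1 - σ) * μ) ^ 2 / γ
        + w ^ 2 * σ ^ 2 * (1 - σ) ^ 2 / γ
        + σ ^ 2 - Real.log (σ ^ 2) + μ ^ 2 - 1))
    (w μ σ : ℝ) (hσ : σ ∈ Set.Ioo (0 : ℝ) 1) (hwμ : w * μ ≠ 0)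
    (hcw : deriv (fun w' => L w' μ σ) w = 0)
    (hcμ : deriv (fun μ' => L w μ' σ) μ = 0)
    (hcσ : deriv (fun σ' => L w μ σ') σ = 0) :
    σ ^ 2 = γ / x ^ 2 ∧ μ ^ 2 = 1 - γ / x ^ 2 := by
  obtain ⟨hσ0, hσ1⟩ := hσ
  have hσne : σ ≠ 0 := ne_of_gt hσ0
  have ht : (1 : ℝ) - σ ≠ 0 := by intro h; linarith
  have hγ0 : γ ≠ 0 := ne_of_gt hγ
  have hw0 : w ≠ 0 := fun h => hwμ (by rw [h, zero_mul])
  have hμ0 : μ ≠ 0 := fun h => hwμ (by rw [h, mul_zero])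
  -- derivative in w
  have Hw : HasDerivAt (fun w' => L w' μ σ)
      ((-(x - w * (1 - σ) * μ) * ((1 - σ) * μ) + w * σ ^ 2 * (1 - σ) ^ 2) / γ) w := by
    have he : (fun w' => L w' μ σ) = fun w' : ℝ => (1 / 2) * (Real.log (2 * π * γ)
        + (x - w' * (1 - σ) * μ) ^ 2 / γ
        + w' ^ 2 * σ ^ 2 * (1 - σ) ^ 2 / γ
        + σ ^ 2 - Real.log (σ ^ 2) + μ ^ 2 - 1) := funext fun w' => hL w' μ σ
    rw [he]
    have h1 := ((((hasDerivAt_id' (𝕜 := ℝ) w).mul_const (1 - σ)).mul_const μ).const_sub x).pow 2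
      |>.div_const γ
    have h2 := (((hasDerivAt_pow 2 w).mul_const (σ ^ 2)).mul_const ((1 - σ) ^ 2)).div_const γ
    have H := (((((h1.const_add (Real.log (2 * π * γ))).add h2).add_const (σ ^ 2)).sub_const
      (Real.log (σ ^ 2))).add_const (μ ^ 2)).sub_const 1 |>.const_mul (1 / 2)
    refine H.congr_deriv ?_
    field_simp
    ring
  -- derivative in μ
  have Hμ : HasDerivAt (fun μ' => L w μ' σ)
      (-(x - w * (1 - σ) * μ) * (w * (1 - σ)) / γ + μ) μ := by
    have he : (fun μ' => L w μ' σ) = fun μ' : ℝ => (1 / 2) * (Real.log (2 * π * γ)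
        + (x - w * (1 - σ) * μ') ^ 2 / γ
        + w ^ 2 * σ ^ 2 * (1 - σ) ^ 2 / γ
        + σ ^ 2 - Real.log (σ ^ 2) + μ' ^ 2 - 1) := funext fun μ' => hL w μ' σ
    rw [he]
    have h1 := (((hasDerivAt_id' (𝕜 := ℝ) μ).const_mul (w * (1 - σ))).const_sub x).pow 2
      |>.div_const γ
    have H := (((((h1.const_add (Real.log (2 * π * γ))).add_const
      (w ^ 2 * σ ^ 2 * (1 - σ) ^ 2 / γ)).add_const (σ ^ 2)).sub_const
      (Real.log (σ ^ 2))).add (hasDerivAt_pow 2 μ)).sub_const 1 |>.const_mul (1 / 2)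
    refine H.congr_deriv ?_
    field_simp
    ring
  -- derivative in σ
  have Hσ : HasDerivAt (fun σ' => L w μ σ')
      ((x - w * (1 - σ) * μ) * (w * μ) / γ
        + (w ^ 2 * σ * (1 - σ) ^ 2 - w ^ 2 * σ ^ 2 * (1 - σ)) / γ + σ - 1 / σ) σ := by
    have he : (fun σ' => L w μ σ') = fun σ' : ℝ => (1 / 2) * (Real.log (2 * π * γ)
        + (x - w * (1 - σ') * μ) ^ 2 / γ
        + w ^ 2 * σ' ^ 2 * (1 - σ') ^ 2 / γ
        + σ' ^ 2 - Real.log (σ' ^ 2) + μ ^ 2 - 1) := funext fun σ' => hL w μ σ'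
    rw [he]
    have hsq : σ ^ 2 ≠ 0 := pow_ne_zero 2 hσne
    have hone : HasDerivAt (fun σ' : ℝ => (1 : ℝ) - σ') (-1) σ :=
      (hasDerivAt_id' (𝕜 := ℝ) σ).const_sub 1
    have h1 := (((hone.const_mul w).mul_const μ).const_sub x).pow 2 |>.div_const γ
    have h2 := (((hasDerivAt_pow 2 σ).const_mul (w ^ 2)).mul (hone.pow 2)).div_const γ
    have h3 := (hasDerivAt_pow 2 σ).log hsq
    have H := (((((h1.const_add (Real.log (2 * π * γ))).add h2).add
      (hasDerivAt_pow 2 σ)).sub h3).add_const (μ ^ 2)).sub_const 1 |>.const_mul (1 / 2)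
    refine H.congr_deriv ?_
    simp only [Pi.pow_apply]
    field_simp
    ring
  rw [Hw.deriv] at hcw
  rw [Hμ.deriv] at hcμ
  rw [Hσ.deriv] at hcσ
  -- polynomial equations
  have h1 : (x - w * (1 - σ) * μ) * ((1 - σ) * μ) = w * σ ^ 2 * (1 - σ) ^ 2 := by
    field_simp at hcw
    linarith [hcw]
  have h2 : (x - w * (1 - σ) * μ) * (w * (1 - σ)) = γ * μ := by
    field_simp at hcμ
    linarith [hcμ]
  have h3 : (x - w * (1 - σ) * μ) * (w * μ) * σ
      + w ^ 2 * σ ^ 2 * (1 - σ) * ((1 - σ) - σ) + γ * σ ^ 2 - γ = 0 := by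
    field_simp at hcσ
    linear_combination hcσ
  set t : ℝ := 1 - σ with htdef
  have k1 : γ * μ ^ 2 = w ^ 2 * σ ^ 2 * t ^ 2 := by linear_combination w * h1 - μ * h2
  have k2 : t * (w ^ 2 * σ ^ 2 * t ^ 2) = t * (γ * (1 - σ ^ 2)) := by
    linear_combination t * h3 - w * σ * h1
  have k3 : w ^ 2 * σ ^ 2 * t ^ 2 = γ * (1 - σ ^ 2) := mul_left_cancel₀ ht k2
  have k4 : μ ^ 2 = 1 - σ ^ 2 := by
    have : γ * μ ^ 2 = γ * (1 - σ ^ 2) := by linear_combination k1 + k3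
    exact mul_left_cancel₀ hγ0 this
  have k5 : σ ^ 2 * x * w * t = γ * μ := by
    linear_combination σ ^ 2 * h2 - μ * k1 + γ * μ * k4
  have htμ : t * μ ≠ 0 := mul_ne_zero ht hμ0
  have k6 : x * (x - w * t * μ) = γ := by
    have : t * μ * (x * (x - w * t * μ)) = t * μ * γ := by
      linear_combination x * h1 + t * k5
    exact mul_left_cancel₀ htμ this
  have k8 : w * t = x * μ := by
    have : γ * (w * t) = γ * (x * μ) := by linear_combination x * h2 - w * t * k6
    exact mul_left_cancel₀ hγ0 this
  have k10 : x ^ 2 * σ ^ 2 = γ := by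
    have : t * μ * (x ^ 2 * σ ^ 2) = t * μ * γ := by
      linear_combination t * μ * k6 - x * h1 - σ ^ 2 * t * x * k8
    exact mul_left_cancel₀ htμ this
  have hx2 : x ^ 2 ≠ 0 := pow_ne_zero 2 hx
  constructor
  · field_simp
    linear_combination k10
  · field_simp
    linear_combination x ^ 2 * k4 - k10
end

section
/- Let λ₁, λ₂ > 0 and h(z) = |z| (the ℓ₁ penalty). For the profiled SAE loss ℓ(z) = λ₂ x² / (λ₂ + z²) + λ₁ |z|, there exists x ∈ ℝ such that ℓ has at least two distinct local minimizers on ℝ (one of which is z = 0). -/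
open Set

/-- For the profiled SAE loss with the ℓ₁ penalty, there exists data `x` such that the
loss has at least two distinct local minimizers, one of which is `z = 0`. -/
theorem stmt_5 (lam1 lam2 : ℝ) (h1 : 0 < lam1) (h2 : 0 < lam2) :
    ∃ (x : ℝ) (ℓ : ℝ → ℝ) (z₁ : ℝ),
      (∀ z, ℓ z = lam2 * x ^ 2 / (lam2 + z ^ 2) + lam1 * |z|) ∧
      z₁ ≠ 0 ∧ IsLocalMin ℓ 0 ∧ IsLocalMin ℓ z₁ := by
  set s := Real.sqrt lam2 with hs
  have hspos : 0 < s := Real.sqrt_pos.mpr h2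
  have hs2 : s ^ 2 = lam2 := Real.sq_sqrt h2.le
  set x := Real.sqrt (2 * s * lam1) with hx
  have hx2 : x ^ 2 = 2 * s * lam1 := Real.sq_sqrt (by positivity)
  refine ⟨x, fun z => lam2 * x ^ 2 / (lam2 + z ^ 2) + lam1 * |z|, s,
    fun z => rfl, hspos.ne', ?_, ?_⟩
  · -- local min at 0
    rw [IsLocalMin, IsMinFilter, Metric.eventually_nhds_iff]
    refine ⟨s / 2, by positivity, fun z hz => ?_⟩
    rw [Real.dist_eq, sub_zero] at hz
    have hz' : |z| ≤ s / 2 := hz.le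
    have hd : 0 < lam2 + z ^ 2 := by positivity
    simp only [abs_zero, mul_zero, add_zero, ne_eq, OfNat.ofNat_ne_zero,
      not_false_eq_true, zero_pow, add_zero]
    have e1 : lam2 * x ^ 2 / lam2 = x ^ 2 := by field_simp
    rw [e1, ← sub_nonneg]
    have e2 : lam2 * x ^ 2 / (lam2 + z ^ 2) + lam1 * |z| - x ^ 2
        = (lam1 * |z| * (lam2 + z ^ 2) - x ^ 2 * z ^ 2) / (lam2 + z ^ 2) := by
      field_simp; ring
    rw [e2]
    apply div_nonneg _ hd.le
    have h3 : z ^ 2 = |z| ^ 2 := (sq_abs z).symm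
    rw [← hs2, hx2, h3]
    nlinarith [mul_nonneg (mul_nonneg (mul_nonneg h1.le hspos.le) (abs_nonneg z))
      (sub_nonneg.mpr hz'), abs_nonneg z, mul_nonneg h1.le (abs_nonneg z), sq_nonneg (|z|)]
  · -- local min at s
    have key : ∀ z ∈ Ioo (s/2) (2*s),
        deriv (fun z => lam2 * x ^ 2 / (lam2 + z ^ 2) + lam1 * |z|) z
          = lam1 - lam2 * x ^ 2 * (2 * z) / (lam2 + z ^ 2) ^ 2 := by
      intro z hz
      have hzpos : 0 < z := lt_trans (by positivity) hz.1
      have hd : lam2 + z ^ 2 ≠ 0 := by positivity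
      have heq : (fun z => lam2 * x ^ 2 / (lam2 + z ^ 2) + lam1 * |z|)
          =ᶠ[nhds z] fun z => lam2 * x ^ 2 / (lam2 + z ^ 2) + lam1 * z := by
        filter_upwards [eventually_gt_nhds hzpos] with w hw
        rw [abs_of_pos hw]
      rw [heq.deriv_eq]
      have hder : HasDerivAt (fun z : ℝ => lam2 * x ^ 2 / (lam2 + z ^ 2) + lam1 * z)
          ((0 * (lam2 + z ^ 2) - lam2 * x ^ 2 * (2 * z)) / (lam2 + z ^ 2) ^ 2 + lam1) z := by
        have : HasDerivAt (fun z : ℝ => lam2 + z ^ 2) (2 * z) z := by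
          simpa using ((hasDerivAt_pow 2 z).const_add lam2)
        exact ((hasDerivAt_const z (lam2 * x ^ 2)).div this hd).add
          ((hasDerivAt_id z).const_mul lam1 |>.congr_deriv (by ring))
      rw [hder.deriv]; ring
    have hdiff : ∀ t : Set ℝ, t ⊆ Ioo (s/2) (2*s) →
        DifferentiableOn ℝ (fun z => lam2 * x ^ 2 / (lam2 + z ^ 2) + lam1 * |z|) t := by
      intro t ht z hz
      have hz' := ht hz
      have hzpos : 0 < z := lt_trans (by positivity) hz'.1
      have hd : lam2 + z ^ 2 ≠ 0 := by positivity
      have heq : (fun z => lam2 * x ^ 2 / (lam2 + z ^ 2) + lam1 * |z|)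
          =ᶠ[nhds z] fun z => lam2 * x ^ 2 / (lam2 + z ^ 2) + lam1 * z := by
        filter_upwards [eventually_gt_nhds hzpos] with w hw
        rw [abs_of_pos hw]
      have : DifferentiableAt ℝ (fun z : ℝ => lam2 * x ^ 2 / (lam2 + z ^ 2) + lam1 * z) z := by
        apply DifferentiableAt.add
        · exact (differentiableAt_const _).div (by fun_prop) hd
        · fun_prop
      exact (this.congr_of_eventuallyEq heq).differentiableWithinAt
    have habs : ContinuousAt (fun z => lam2 * x ^ 2 / (lam2 + z ^ 2) + lam1 * |z|) s := by
      apply ContinuousAt.add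
      · exact continuousAt_const.div (by fun_prop) (by positivity)
      · exact continuousAt_const.mul (continuous_abs.continuousAt)
    apply isLocalMin_of_deriv_Ioo (a := s/2) (c := 2*s)
      (by linarith) (by linarith) habs
      (hdiff _ (Ioo_subset_Ioo le_rfl (by linarith)))
      (hdiff _ (Ioo_subset_Ioo (by linarith) le_rfl))
    · intro z hz
      have hz2 : z ∈ Ioo (s/2) (2*s) := ⟨hz.1, by linarith [hz.2]⟩
      rw [key z hz2]
      have hzpos : 0 < z := lt_trans (by positivity) hz.1
      have hd : (0:ℝ) < (lam2 + z ^ 2) ^ 2 := by positivity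
      rw [sub_nonpos, ← sub_nonneg]
      have e2 : lam2 * x ^ 2 * (2 * z) / (lam2 + z ^ 2) ^ 2 - lam1
          = (lam2 * x ^ 2 * (2 * z) - lam1 * (lam2 + z ^ 2) ^ 2) / (lam2 + z ^ 2) ^ 2 := by
        field_simp
      rw [e2]
      apply div_nonneg _ hd.le
      rw [← hs2, hx2]
      have hr : 0 ≤ z ^ 3 + s * z ^ 2 + 3 * s ^ 2 * z - s ^ 3 := by
        nlinarith [pow_pos hzpos 3, mul_nonneg hspos.le (sq_nonneg z),
          mul_lt_mul_of_pos_left hz.1 (mul_pos hspos hspos)]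
      nlinarith [mul_nonneg (mul_nonneg h1.le (sub_nonneg.mpr hz.2.le)) hr]
    · intro z hz
      have hz2 : z ∈ Ioo (s/2) (2*s) := ⟨by linarith [hz.1], hz.2⟩
      rw [key z hz2]
      have hzpos : 0 < z := hspos.trans hz.1
      have hd : (0:ℝ) < (lam2 + z ^ 2) ^ 2 := by positivity
      rw [sub_nonneg, div_le_iff₀ hd]
      rw [← hs2, hx2]
      have hr : 0 ≤ z ^ 3 + s * z ^ 2 + 3 * s ^ 2 * z - s ^ 3 := by
        nlinarith [pow_pos hzpos 3, mul_nonneg hspos.le (sq_nonneg z),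
          mul_lt_mul_of_pos_left hz2.1 (mul_pos hspos hspos)]
      nlinarith [mul_nonneg (mul_nonneg h1.le (sub_nonneg.mpr hz.1.le)) hr]
end

section
/- For the VAEase linear decoder with gating, i.e., decoder input z̃ = (1 − σ) ⊙ z where z ∼ N(μ, diag(σ²)), the expected reconstruction loss satisfies E[‖x − W z̃‖²] = ‖x − W((1−σ)⊙μ)‖² + Σⱼ σⱼ²(1−σⱼ)² ‖w_{:j}‖². In particular, the penalty coefficient σⱼ²(1−σⱼ)² vanishes both as σⱼ → 0 and as σⱼ → 1. -/
open MeasureTheory ProbabilityTheory Matrix Filter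

open Real


noncomputable section

lemma int_exp2 : ∫ x : ℝ, rexp (-x^2/2) = Real.sqrt (2*π) := by
  have h := integral_gaussian (1/2 : ℝ)
  have h2 : (fun x : ℝ => rexp (-(1/2) * x^2)) = fun x : ℝ => rexp (-x^2/2) := by
    funext x; ring_nf
  rw [h2] at h
  rw [h]
  rw [show π / (1/2) = 2 * π by ring]

lemma integrable_exp2 : Integrable (fun x : ℝ => rexp (-x^2/2)) := by
  have h := integrable_exp_neg_mul_sq (b := (1/2:ℝ)) (by norm_num)
  convert h using 2 with x
  ring_nf

lemma integrable_x_exp2 : Integrable (fun x : ℝ => x * rexp (-x^2/2)) := by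
  have h := integrable_rpow_mul_exp_neg_mul_sq (b := (1/2:ℝ)) (by norm_num) (s := 1) (by norm_num)
  convert h using 2 with x
  rw [Real.rpow_one]
  ring_nf

lemma integrable_x2_exp2 : Integrable (fun x : ℝ => x^2 * rexp (-x^2/2)) := by
  have h := integrable_rpow_mul_exp_neg_mul_sq (b := (1/2:ℝ)) (by norm_num) (s := 2) (by norm_num)
  convert h using 2 with x
  rw [show (2:ℝ) = ((2:ℕ):ℝ) by norm_num, Real.rpow_natCast]
  ring_nf

lemma int_x_exp2 : ∫ x : ℝ, x * rexp (-x^2/2) = 0 := by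
  have h := integral_neg_eq_self (fun x : ℝ => x * rexp (-x^2/2)) volume
  simp only [neg_sq, neg_mul] at h
  rw [integral_neg] at h
  linarith

lemma tendsto_x_exp2 : Tendsto (fun x : ℝ => x * rexp (-x^2/2)) atTop (nhds 0) := by
  have hlim : Tendsto (fun x : ℝ => rexp (-(1/2) * x)) atTop (nhds 0) := by
    have := tendsto_exp_neg_atTop_nhds_zero.comp
      (Tendsto.atTop_div_const (r := (2:ℝ)) (by norm_num) tendsto_id)
    convert this using 2 with x
    simp [Function.comp]; ring
  have h := (rpow_mul_exp_neg_mul_sq_isLittleO_exp_neg (b := (1/2:ℝ)) (by norm_num) 1).isBigO.trans_tendsto hlim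
  have h2 : (fun x : ℝ => x ^ (1:ℝ) * rexp (-(1/2) * x^2)) = fun x : ℝ => x * rexp (-x^2/2) := by
    funext x; rw [Real.rpow_one]; ring_nf
  rwa [h2] at h

lemma int_x2_exp2 : ∫ x : ℝ, x^2 * rexp (-x^2/2) = Real.sqrt (2*π) := by
  set F : ℝ → ℝ := fun x => -x * rexp (-x^2/2) with hF
  have hderiv : ∀ x : ℝ, HasDerivAt F (x^2 * rexp (-x^2/2) - rexp (-x^2/2)) x := by
    intro x
    have h1 : HasDerivAt (fun x : ℝ => -x^2/2) (-x) x := by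
      have := ((hasDerivAt_pow 2 x).div_const 2).fun_neg
      rw [show (fun x : ℝ => -x^2/2) = fun i => -(i^2/2) by funext y; ring]
      exact this.congr_deriv (by push_cast; ring)
    have h2 := h1.exp
    have h3 := (hasDerivAt_id x).neg.mul h2
    have hF' : F = -id * fun x => rexp (-x^2/2) := by funext y; simp [F]
    rw [hF']
    exact h3.congr_deriv (by simp only [Pi.neg_apply, id_eq]; ring)
  have hint : Integrable (fun x : ℝ => x^2 * rexp (-x^2/2) - rexp (-x^2/2)) :=
    integrable_x2_exp2.sub integrable_exp2
  have htop : Tendsto F atTop (nhds 0) := by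
    have := tendsto_x_exp2.neg
    simpa [F] using this
  have hbot : Tendsto F atBot (nhds 0) := by
    have := tendsto_x_exp2.comp tendsto_neg_atBot_atTop
    convert this using 1
    funext y
    simp only [F, Function.comp, neg_sq, neg_mul]
  have key := integral_of_hasDerivAt_of_tendsto hderiv hint hbot htop
  rw [integral_sub integrable_x2_exp2 integrable_exp2, int_exp2] at key
  linarith

end


noncomputable section S2

lemma g01_pdf_nonneg (x : ℝ) : 0 ≤ gaussianPDFReal 0 1 x := gaussianPDFReal_nonneg _ _ _

lemma g01_withDensity :
    gaussianReal 0 1 = (volume : Measure ℝ).withDensity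
      (fun x => ((gaussianPDFReal 0 1 x).toNNReal : ENNReal)) := by
  rw [gaussianReal_of_var_ne_zero 0 one_ne_zero, gaussianPDF_def]
  rfl

lemma g01_meas : Measurable (fun x : ℝ => (gaussianPDFReal 0 1 x).toNNReal) :=
  (measurable_gaussianPDFReal _ _).real_toNNReal

lemma g01_integrable_iff (g : ℝ → ℝ) :
    Integrable g (gaussianReal 0 1) ↔
      Integrable (fun x => gaussianPDFReal 0 1 x * g x) volume := by
  rw [g01_withDensity, integrable_withDensity_iff_integrable_smul g01_meas]
  constructor <;> intro h <;> [skip; skip] <;>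
  · refine h.congr ?_
    filter_upwards with x
    simp [NNReal.smul_def, Real.coe_toNNReal _ (g01_pdf_nonneg x)]

lemma g01_integral (g : ℝ → ℝ) :
    ∫ x, g x ∂(gaussianReal 0 1) = ∫ x, gaussianPDFReal 0 1 x * g x := by
  rw [g01_withDensity, integral_withDensity_eq_integral_smul g01_meas]
  congr 1; funext x
  simp [NNReal.smul_def, Real.coe_toNNReal _ (g01_pdf_nonneg x)]

lemma g01_pdf_eq (x : ℝ) :
    gaussianPDFReal 0 1 x = (Real.sqrt (2*π))⁻¹ * rexp (-x^2/2) := by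
  simp [gaussianPDFReal]

lemma sqrt_two_pi_ne : Real.sqrt (2*π) ≠ 0 := by
  positivity

lemma g01_integrable_id : Integrable (fun x : ℝ => x) (gaussianReal 0 1) := by
  rw [g01_integrable_iff]
  have h : (fun x : ℝ => gaussianPDFReal 0 1 x * x)
      = fun x => (Real.sqrt (2*π))⁻¹ * (x * rexp (-x^2/2)) := by
    funext x; rw [g01_pdf_eq]; ring
  rw [h]
  exact integrable_x_exp2.const_mul _

lemma g01_integrable_sq : Integrable (fun x : ℝ => x^2) (gaussianReal 0 1) := by
  rw [g01_integrable_iff]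
  have h : (fun x : ℝ => gaussianPDFReal 0 1 x * x^2)
      = fun x => (Real.sqrt (2*π))⁻¹ * (x^2 * rexp (-x^2/2)) := by
    funext x; rw [g01_pdf_eq]; ring
  rw [h]
  exact integrable_x2_exp2.const_mul _

lemma g01_int_id : ∫ x, x ∂(gaussianReal 0 1) = 0 := by
  rw [g01_integral]
  have h : (fun x : ℝ => gaussianPDFReal 0 1 x * x)
      = fun x => (Real.sqrt (2*π))⁻¹ * (x * rexp (-x^2/2)) := by
    funext x; rw [g01_pdf_eq]; ring
  rw [h, integral_const_mul, int_x_exp2, mul_zero]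

lemma g01_int_sq : ∫ x, x^2 ∂(gaussianReal 0 1) = 1 := by
  rw [g01_integral]
  have h : (fun x : ℝ => gaussianPDFReal 0 1 x * x^2)
      = fun x => (Real.sqrt (2*π))⁻¹ * (x^2 * rexp (-x^2/2)) := by
    funext x; rw [g01_pdf_eq]; ring
  rw [h, integral_const_mul, int_x2_exp2, inv_mul_cancel₀ sqrt_two_pi_ne]

lemma gaussianReal_eq_map (m : ℝ) (v : NNReal) (hv : v ≠ 0) :
    gaussianReal m v
      = (gaussianReal 0 1).map (fun x => Real.sqrt v * x + m) := by
  have h1 : (gaussianReal 0 1).map (fun x => Real.sqrt v * x) = gaussianReal 0 v := by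
    rw [show (fun x : ℝ => Real.sqrt v * x) = (Real.sqrt v * ·) from rfl,
      gaussianReal_map_const_mul]
    congr 1
    · simp
    · rw [mul_one]
      ext
      simp [Real.sq_sqrt v.coe_nonneg]
  have h2 : (gaussianReal 0 v).map (· + m) = gaussianReal m v := by
    rw [gaussianReal_map_add_const, zero_add]
  calc gaussianReal m v = (gaussianReal 0 v).map (· + m) := h2.symm
    _ = ((gaussianReal 0 1).map (fun x => Real.sqrt v * x)).map (· + m) := by rw [h1]
    _ = (gaussianReal 0 1).map ((· + m) ∘ (fun x => Real.sqrt v * x)) :=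
        (Measure.map_map (by fun_prop) (by fun_prop))
    _ = (gaussianReal 0 1).map (fun x => Real.sqrt v * x + m) := rfl

lemma meas_affine (s m : ℝ) : Measurable (fun x : ℝ => s * x + m) :=
  (measurable_id.const_mul _).add_const _

lemma dirac_integrable (f : ℝ → ℝ) (a : ℝ) : Integrable f (Measure.dirac a) := by
  have h : f =ᵐ[Measure.dirac a] fun _ => f a := by
    rw [ae_dirac_eq]
    exact Filter.eventually_pure.2 rfl
  exact (integrable_const (f a)).congr h.symm

/-- Integrability of `x - m` under the Gaussian. -/
lemma gauss_integrable_sub (m : ℝ) (v : NNReal) :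
    Integrable (fun x : ℝ => x - m) (gaussianReal m v) := by
  by_cases hv : v = 0
  · rw [hv, gaussianReal_zero_var]; exact dirac_integrable _ _
  · rw [gaussianReal_eq_map m v hv,
      integrable_map_measure (by fun_prop) (meas_affine _ _).aemeasurable]
    have h : ((fun x : ℝ => x - m) ∘ fun x => Real.sqrt v * x + m)
        = fun x => Real.sqrt v * x := by funext x; simp [Function.comp]
    rw [h]
    exact g01_integrable_id.const_mul _

lemma gauss_integrable_sub_sq (m : ℝ) (v : NNReal) :
    Integrable (fun x : ℝ => (x - m)^2) (gaussianReal m v) := by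
  by_cases hv : v = 0
  · rw [hv, gaussianReal_zero_var]; exact dirac_integrable _ _
  · rw [gaussianReal_eq_map m v hv,
      integrable_map_measure
        (by measurability : Measurable fun x : ℝ => (x - m)^2).aestronglyMeasurable
        (meas_affine _ _).aemeasurable]
    have h : ((fun x : ℝ => (x - m)^2) ∘ fun x => Real.sqrt v * x + m)
        = fun x => (v:ℝ) * x^2 := by
      funext x
      simp only [Function.comp]
      rw [add_sub_cancel_right, mul_pow, Real.sq_sqrt v.coe_nonneg]
    rw [h]
    exact g01_integrable_sq.const_mul _

lemma gauss_int_sub (m : ℝ) (v : NNReal) :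
    ∫ x, (x - m) ∂(gaussianReal m v) = 0 := by
  by_cases hv : v = 0
  · rw [hv, gaussianReal_zero_var, integral_dirac]; simp
  · rw [gaussianReal_eq_map m v hv,
      integral_map (meas_affine _ _).aemeasurable (by fun_prop)]
    have h : ∀ x : ℝ, Real.sqrt v * x + m - m = Real.sqrt v * x := by intro x; ring
    simp_rw [h]
    rw [integral_const_mul, g01_int_id, mul_zero]

lemma gauss_int_sub_sq (m : ℝ) (v : NNReal) :
    ∫ x, (x - m)^2 ∂(gaussianReal m v) = (v : ℝ) := by
  by_cases hv : v = 0
  · rw [hv, gaussianReal_zero_var, integral_dirac]; simp [hv]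
  · rw [gaussianReal_eq_map m v hv,
      integral_map (meas_affine _ _).aemeasurable
        (by measurability : Measurable fun x : ℝ => (x - m)^2).aestronglyMeasurable]
    have h : ∀ x : ℝ, (Real.sqrt v * x + m - m)^2 = (v:ℝ) * x^2 := by
      intro x
      rw [add_sub_cancel_right, mul_pow, Real.sq_sqrt v.coe_nonneg]
    simp_rw [h]
    rw [integral_const_mul, g01_int_sq, mul_one]

end S2


section S3

variable {ι : Type*} [Fintype ι] [DecidableEq ι] (m : ι → Measure ℝ)
  [∀ i, IsProbabilityMeasure (m i)]

lemma pi_prod_integrable (g : ι → ℝ → ℝ) (hg : ∀ i, Integrable (g i) (m i)) :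
    Integrable (fun z : ι → ℝ => ∏ i, g i (z i)) (Measure.pi m) :=
  Integrable.fintype_prod_dep (μ := m) hg

lemma pi_prod_integral (g : ι → ℝ → ℝ) :
    ∫ z : ι → ℝ, ∏ i, g i (z i) ∂(Measure.pi m) = ∏ i, ∫ x, g i x ∂(m i) :=
  integral_fintype_prod_eq_prod (μ := m) g

variable {m}

lemma prod_single (j : ι) (g : ℝ → ℝ) (z : ι → ℝ) :
    ∏ i, (if i = j then g else fun _ => (1:ℝ)) (z i) = g (z j) := by
  have h : ∀ i, (if i = j then g else fun _ => (1:ℝ)) (z i)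
      = if i = j then g (z i) else 1 := by intro i; split <;> rfl
  simp_rw [h]
  simp [Finset.prod_ite_eq']

lemma pi_single_integrable (j : ι) (g : ℝ → ℝ) (hg : Integrable g (m j)) :
    Integrable (fun z : ι → ℝ => g (z j)) (Measure.pi m) := by
  have h := pi_prod_integrable m (fun i => if i = j then g else fun _ => (1:ℝ))
    (fun i => by split_ifs with hij
                 · subst hij; exact hg
                 · exact integrable_const 1)
  simpa [prod_single] using h

lemma pi_single_integral (j : ι) (g : ℝ → ℝ) :
    ∫ z : ι → ℝ, g (z j) ∂(Measure.pi m) = ∫ x, g x ∂(m j) := by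
  have h := pi_prod_integral m (fun i => if i = j then g else fun _ => (1:ℝ))
  simp_rw [prod_single] at h
  rw [h, Finset.prod_eq_single_of_mem j (Finset.mem_univ j)]
  · simp
  · intro i _ hij
    simp [if_neg hij]

lemma prod_double {j k : ι} (hjk : j ≠ k) (g h : ℝ → ℝ) (z : ι → ℝ) :
    ∏ i, (if i = j then g else if i = k then h else fun _ => (1:ℝ)) (z i)
      = g (z j) * h (z k) := by
  classical
  rw [← Finset.mul_prod_erase Finset.univ _ (Finset.mem_univ j)]
  rw [← Finset.mul_prod_erase (Finset.univ.erase j) _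
    (Finset.mem_erase.2 ⟨hjk.symm, Finset.mem_univ k⟩)]
  rw [Finset.prod_eq_one]
  · simp [if_neg hjk.symm, mul_one]
  · intro i hi
    have h1 : i ≠ k := (Finset.mem_erase.1 hi).1
    have h2 : i ≠ j := (Finset.mem_erase.1 (Finset.mem_erase.1 hi).2).1
    simp [if_neg h1, if_neg h2]

lemma pi_double_integrable {j k : ι} (hjk : j ≠ k) (g h : ℝ → ℝ)
    (hg : Integrable g (m j)) (hh : Integrable h (m k)) :
    Integrable (fun z : ι → ℝ => g (z j) * h (z k)) (Measure.pi m) := by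
  have hint := pi_prod_integrable m
    (fun i => if i = j then g else if i = k then h else fun _ => (1:ℝ))
    (fun i => by
      split_ifs with h1 h2
      · subst h1; exact hg
      · subst h2; exact hh
      · exact integrable_const 1)
  simpa [prod_double hjk] using hint

lemma pi_double_integral {j k : ι} (hjk : j ≠ k) (g h : ℝ → ℝ) :
    ∫ z : ι → ℝ, g (z j) * h (z k) ∂(Measure.pi m)
      = (∫ x, g x ∂(m j)) * ∫ x, h x ∂(m k) := by
  have hint := pi_prod_integral m
    (fun i => if i = j then g else if i = k then h else fun _ => (1:ℝ))
  simp_rw [prod_double hjk] at hint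
  rw [hint]
  rw [← Finset.mul_prod_erase Finset.univ _ (Finset.mem_univ j),
    ← Finset.mul_prod_erase (Finset.univ.erase j) _
      (Finset.mem_erase.2 ⟨hjk.symm, Finset.mem_univ k⟩),
    Finset.prod_eq_one]
  · simp [if_neg hjk.symm, mul_one]
  · intro i hi
    have h1 : i ≠ k := (Finset.mem_erase.1 hi).1
    have h2 : i ≠ j := (Finset.mem_erase.1 (Finset.mem_erase.1 hi).2).1
    simp [if_neg h1, if_neg h2]

end S3

/-- VAEase linear decoder with gating `z̃ = (1−σ)⊙z`, `z ∼ N(μ, diag σ²)`: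
`E[‖x − Wz̃‖²] = ‖x − W((1−σ)⊙μ)‖² + Σⱼ σⱼ²(1−σⱼ)²‖w_{:j}‖²`, and the penalty
coefficient `t²(1−t)²` vanishes both as `t → 0` and as `t → 1`. -/
theorem stmt_11 (d κ : ℕ) (W : Matrix (Fin d) (Fin κ) ℝ) (x : Fin d → ℝ)
    (μ σ : Fin κ → ℝ) (hσ : ∀ j, 0 ≤ σ j)
    (gauss : Measure (Fin κ → ℝ))
    (hgauss : gauss = Measure.pi fun j => gaussianReal (μ j) ((σ j) ^ 2).toNNReal) :
    (∫ z, (∑ i, (x i - W.mulVec (fun j => (1 - σ j) * z j) i) ^ 2) ∂gauss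
      = (∑ i, (x i - W.mulVec (fun j => (1 - σ j) * μ j) i) ^ 2)
        + ∑ j, (σ j) ^ 2 * (1 - σ j) ^ 2 * ∑ i, (W i j) ^ 2) ∧
    Tendsto (fun t : ℝ => t ^ 2 * (1 - t) ^ 2) (nhds 0) (nhds 0) ∧
    Tendsto (fun t : ℝ => t ^ 2 * (1 - t) ^ 2) (nhds 1) (nhds 0) := by
  have hcont : Continuous fun t : ℝ => t ^ 2 * (1 - t) ^ 2 := by fun_prop
  refine ⟨?_, by simpa using hcont.tendsto 0, by simpa using hcont.tendsto 1⟩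
  subst hgauss
  set ν : Fin κ → Measure ℝ := fun j => gaussianReal (μ j) ((σ j) ^ 2).toNNReal with hν
  have hvar : ∀ j, ((((σ j) ^ 2).toNNReal : NNReal) : ℝ) = (σ j) ^ 2 := fun j =>
    Real.coe_toNNReal _ (sq_nonneg _)
  -- coordinate facts
  have hYint : ∀ j, Integrable (fun z : Fin κ → ℝ => z j - μ j) (Measure.pi ν) :=
    fun j => pi_single_integrable j (fun y => y - μ j) (gauss_integrable_sub _ _)
  have hYI : ∀ j, ∫ z : Fin κ → ℝ, (z j - μ j) ∂(Measure.pi ν) = 0 := fun j => by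
    rw [pi_single_integral j (fun y => y - μ j)]
    exact gauss_int_sub _ _
  have hQint : ∀ j k, Integrable
      (fun z : Fin κ → ℝ => (z j - μ j) * (z k - μ k)) (Measure.pi ν) := by
    intro j k
    by_cases hjk : j = k
    · subst hjk
      have h := pi_single_integrable (m := ν) j (fun y => (y - μ j) ^ 2)
        (gauss_integrable_sub_sq _ _)
      refine h.congr ?_
      filter_upwards with z
      ring
    · exact pi_double_integrable (m := ν) hjk _ _ (gauss_integrable_sub _ _) (gauss_integrable_sub _ _)
  have hQI : ∀ j k, ∫ z : Fin κ → ℝ, (z j - μ j) * (z k - μ k) ∂(Measure.pi ν)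
      = if j = k then (σ j) ^ 2 else 0 := by
    intro j k
    by_cases hjk : j = k
    · subst hjk
      rw [if_pos rfl]
      have h : (fun z : Fin κ → ℝ => (z j - μ j) * (z j - μ j))
          = fun z => (fun y => (y - μ j) ^ 2) (z j) := by funext z; ring
      rw [h, pi_single_integral j (fun y => (y - μ j) ^ 2), gauss_int_sub_sq, hvar]
    · rw [if_neg hjk, pi_double_integral hjk (fun y => y - μ j) (fun y => y - μ k),
        gauss_int_sub _ _, zero_mul]
  -- constants
  set M : ℝ := ∑ i, (x i - ∑ j, W i j * ((1 - σ j) * μ j)) ^ 2 with hM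
  set A : Fin κ → ℝ := fun j =>
    ∑ i, (-2) * (x i - ∑ l, W i l * ((1 - σ l) * μ l)) * (W i j * (1 - σ j)) with hA
  set B : Fin κ → Fin κ → ℝ := fun j k =>
    ∑ i, (W i j * (1 - σ j)) * (W i k * (1 - σ k)) with hB
  -- pointwise decomposition
  have key : ∀ z : Fin κ → ℝ,
      (∑ i, (x i - W.mulVec (fun j => (1 - σ j) * z j) i) ^ 2)
        = M + ((∑ j, A j * (z j - μ j))
            + ∑ j, ∑ k, B j k * ((z j - μ j) * (z k - μ k))) := by
    intro z
    have hexp : ∀ (aa : ℝ) (t : Fin κ → ℝ),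
        (aa - ∑ j, t j) ^ 2 = aa ^ 2 + ((∑ j, (-2) * aa * t j) + ∑ j, ∑ k, t j * t k) := by
      intro aa t
      have h1 : (∑ j, t j) * (∑ k, t k) = ∑ j, ∑ k, t j * t k := Finset.sum_mul_sum _ _ _ _
      have h2 : ∑ j, (-2) * aa * t j = (-2) * aa * ∑ j, t j := by rw [Finset.mul_sum]
      rw [h2, ← h1]
      ring
    have hsplit : ∀ i, x i - W.mulVec (fun j => (1 - σ j) * z j) i
        = (x i - ∑ j, W i j * ((1 - σ j) * μ j))
          - ∑ j, (W i j * (1 - σ j)) * (z j - μ j) := by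
      intro i
      simp only [mulVec, dotProduct]
      have h3 : ∑ j, (W i j * (1 - σ j)) * (z j - μ j)
          = (∑ j, W i j * ((1 - σ j) * z j)) - ∑ j, W i j * ((1 - σ j) * μ j) := by
        rw [← Finset.sum_sub_distrib]
        exact Finset.sum_congr rfl fun j _ => by ring
      rw [h3]
      ring
    calc
      (∑ i, (x i - W.mulVec (fun j => (1 - σ j) * z j) i) ^ 2)
          = ∑ i, ((x i - ∑ j, W i j * ((1 - σ j) * μ j)) ^ 2
              + ((∑ j, (-2) * (x i - ∑ l, W i l * ((1 - σ l) * μ l))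
                    * ((W i j * (1 - σ j)) * (z j - μ j)))
                + ∑ j, ∑ k, ((W i j * (1 - σ j)) * (z j - μ j))
                    * ((W i k * (1 - σ k)) * (z k - μ k)))) := by
        refine Finset.sum_congr rfl fun i _ => ?_
        rw [hsplit i, hexp]
      _ = M + ((∑ j, A j * (z j - μ j))
            + ∑ j, ∑ k, B j k * ((z j - μ j) * (z k - μ k))) := by
        rw [Finset.sum_add_distrib, Finset.sum_add_distrib]
        congr 1
        congr 1
        · rw [Finset.sum_comm]
          refine Finset.sum_congr rfl fun j _ => ?_
          have hAj : A j * (z j - μ j)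
              = ∑ i, ((-2) * (x i - ∑ l, W i l * ((1 - σ l) * μ l))
                  * (W i j * (1 - σ j))) * (z j - μ j) := by
            rw [hA]; exact Finset.sum_mul _ _ _
          rw [hAj]
          exact Finset.sum_congr rfl fun i _ => by ring
        · rw [Finset.sum_comm]
          refine Finset.sum_congr rfl fun j _ => ?_
          rw [Finset.sum_comm]
          refine Finset.sum_congr rfl fun k _ => ?_
          have hBjk : B j k * ((z j - μ j) * (z k - μ k))
              = ∑ i, ((W i j * (1 - σ j)) * (W i k * (1 - σ k)))
                  * ((z j - μ j) * (z k - μ k)) := by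
            rw [hB]; exact Finset.sum_mul _ _ _
          rw [hBjk]
          exact Finset.sum_congr rfl fun i _ => by ring
  -- integrate
  have hint2 : Integrable (fun z : Fin κ → ℝ => ∑ j, A j * (z j - μ j)) (Measure.pi ν) :=
    integrable_finset_sum _ fun j _ => (hYint j).const_mul _
  have hint3 : Integrable (fun z : Fin κ → ℝ =>
      ∑ j, ∑ k, B j k * ((z j - μ j) * (z k - μ k))) (Measure.pi ν) :=
    integrable_finset_sum _ fun j _ =>
      integrable_finset_sum _ fun k _ => (hQint j k).const_mul _
  rw [integral_congr_ae (Filter.Eventually.of_forall key)]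
  have hint23 : Integrable (fun z : Fin κ → ℝ =>
      (∑ j, A j * (z j - μ j)) + ∑ j, ∑ k, B j k * ((z j - μ j) * (z k - μ k)))
      (Measure.pi ν) := hint2.add hint3
  rw [integral_add (integrable_const M) hint23, integral_add hint2 hint3]
  rw [integral_finset_sum _ fun j _ => (hYint j).const_mul _]
  have hinner : ∀ j, ∫ z : Fin κ → ℝ,
      ∑ k, B j k * ((z j - μ j) * (z k - μ k)) ∂(Measure.pi ν) = B j j * (σ j) ^ 2 := by
    intro j
    rw [integral_finset_sum _ fun k _ => (hQint j k).const_mul _]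
    simp_rw [integral_const_mul, hQI]
    rw [Finset.sum_eq_single j]
    · rw [if_pos rfl]
    · intro k _ hkj
      rw [if_neg (fun h => hkj h.symm), mul_zero]
    · intro h
      exact absurd (Finset.mem_univ j) h
  simp_rw [integral_const_mul, hYI, mul_zero, Finset.sum_const_zero]
  rw [integral_finset_sum _ fun j _ =>
    integrable_finset_sum _ fun k _ => (hQint j k).const_mul _]
  rw [Finset.sum_congr rfl fun j _ => hinner j]
  rw [integral_const]
  simp only [measure_univ, probReal_univ, ENNReal.toReal_one, one_smul, zero_add]
  congr 1
  refine Finset.sum_congr rfl fun j _ => ?_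
  have hBjj : B j j * (σ j) ^ 2
      = ∑ i, ((W i j * (1 - σ j)) * (W i j * (1 - σ j))) * (σ j) ^ 2 := by
    rw [hB]; exact Finset.sum_mul _ _ _
  rw [hBjj, Finset.mul_sum]
  exact Finset.sum_congr rfl fun i _ => by ring
end

section
/- Let x ≠ 0 and 0 < γ < x². Then the unique minimum (up to the sign symmetry (μ, w) ↦ (−μ, −w)) of the one-dimensional VAEase objective L(w, μ, σ) = (x − w(1−σ)μ)²/γ + w²σ²(1−σ)²/γ + σ² − log σ² + μ² over w ∈ ℝ, μ ∈ ℝ, σ ∈ (0,1) is attained at σ* = √(γ/x²), μ* = √(1 − γ/x²), w* = μ* x / ((1−σ*)(σ*² + μ*²)). -/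
open Set

/-- The 1-D VAEase objective (constants dropped) has a unique minimum over
`w ∈ ℝ, μ ∈ ℝ, σ ∈ (0,1)`, up to the sign symmetry `(μ,w) ↦ (−μ,−w)`, attained at
`σ* = √(γ/x²)`, `μ* = √(1 − γ/x²)`, `w* = μ* x/((1−σ*)(σ*² + μ*²))`. -/
theorem stmt_14 (x γ : ℝ) (hx : x ≠ 0) (hγ : 0 < γ) (hγx : γ < x ^ 2)
    (L : ℝ → ℝ → ℝ → ℝ)
    (hL : ∀ w μ σ, L w μ σ = (x - w * (1 - σ) * μ) ^ 2 / γ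
        + w ^ 2 * σ ^ 2 * (1 - σ) ^ 2 / γ + σ ^ 2 - Real.log (σ ^ 2) + μ ^ 2)
    (σstar μstar wstar : ℝ)
    (hσs : σstar = Real.sqrt (γ / x ^ 2))
    (hμs : μstar = Real.sqrt (1 - γ / x ^ 2))
    (hws : wstar = μstar * x / ((1 - σstar) * (σstar ^ 2 + μstar ^ 2))) :
    (∀ w μ σ : ℝ, σ ∈ Ioo (0 : ℝ) 1 → L wstar μstar σstar ≤ L w μ σ) ∧
    (∀ w μ σ : ℝ, σ ∈ Ioo (0 : ℝ) 1 → L w μ σ = L wstar μstar σstar →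
      (w = wstar ∧ μ = μstar ∧ σ = σstar) ∨
      (w = -wstar ∧ μ = -μstar ∧ σ = σstar)) := by
  have hx2 : (0:ℝ) < x ^ 2 := by positivity
  have hσs2 : σstar ^ 2 = γ / x ^ 2 := by
    rw [hσs]; exact Real.sq_sqrt (by positivity)
  have hσ0 : 0 < σstar := by
    rw [hσs]; exact Real.sqrt_pos.mpr (by positivity)
  have hσ1 : σstar < 1 := by
    have h1 : σstar ^ 2 < 1 := by rw [hσs2]; rw [div_lt_one hx2]; exact hγx
    nlinarith
  have hμs2 : μstar ^ 2 = 1 - γ / x ^ 2 := by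
    rw [hμs]; exact Real.sq_sqrt (by
      have : γ / x ^ 2 < 1 := (div_lt_one hx2).mpr hγx
      linarith)
  have hμ0 : 0 < μstar := by
    rw [hμs]; exact Real.sqrt_pos.mpr (by
      have : γ / x ^ 2 < 1 := (div_lt_one hx2).mpr hγx
      linarith)
  have hu1 : σstar ^ 2 + μstar ^ 2 = 1 := by rw [hσs2, hμs2]; ring
  have hu1' : μstar ^ 2 + σstar ^ 2 = 1 := by linarith
  have hss : x ^ 2 * σstar ^ 2 = γ := by rw [hσs2]; field_simp
  have h1σ : (0:ℝ) < 1 - σstar := by linarith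
  have hws' : wstar * (1 - σstar) = μstar * x := by
    rw [hws, hu1]; field_simp
  have e2 : Real.log (x ^ 2 / γ) = -2 * Real.log σstar := by
    have h : x ^ 2 / γ = (σstar ^ 2)⁻¹ := by
      rw [hσs2]; field_simp
    rw [h, Real.log_inv, Real.log_pow]; push_cast; ring
  -- the key decomposition
  have main : ∀ w μ σ : ℝ, 0 < σ →
      L w μ σ = (2 + Real.log (x ^ 2 / γ))
        + (w * (1 - σ) * (μ ^ 2 + σ ^ 2) - x * μ) ^ 2 / (γ * (μ ^ 2 + σ ^ 2))
        + x ^ 2 * (σ - σstar * (μ ^ 2 + σ ^ 2)) ^ 2 / (γ * (μ ^ 2 + σ ^ 2))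
        + 2 * (σ / σstar - 1 - Real.log (σ / σstar)) := by
    intro w μ σ hσ
    have hu : 0 < μ ^ 2 + σ ^ 2 := by positivity
    rw [hL, show Real.log (σ / σstar) = Real.log σ - Real.log σstar from
        Real.log_div hσ.ne' hσ0.ne', e2,
      show Real.log (σ ^ 2) = 2 * Real.log σ from by
        rw [Real.log_pow]; push_cast; ring]
    rw [← hss]
    field_simp
    ring
  have hLmin : L wstar μstar σstar = 2 + Real.log (x ^ 2 / γ) := by
    rw [main wstar μstar σstar hσ0, hu1']
    have h0 : wstar * (1 - σstar) * (1:ℝ) - x * μstar = 0 := by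
      rw [mul_one, hws']; ring
    rw [h0, div_self hσ0.ne', Real.log_one]
    ring_nf
  constructor
  · rintro w μ σ ⟨h1, h2⟩
    rw [hLmin, main w μ σ h1]
    have hu : 0 < μ ^ 2 + σ ^ 2 := by positivity
    have t1 : 0 ≤ (w * (1 - σ) * (μ ^ 2 + σ ^ 2) - x * μ) ^ 2 / (γ * (μ ^ 2 + σ ^ 2)) := by
      positivity
    have t2 : 0 ≤ x ^ 2 * (σ - σstar * (μ ^ 2 + σ ^ 2)) ^ 2 / (γ * (μ ^ 2 + σ ^ 2)) := by
      positivity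
    have t3 : Real.log (σ / σstar) ≤ σ / σstar - 1 :=
      Real.log_le_sub_one_of_pos (by positivity)
    linarith
  · rintro w μ σ ⟨h1, h2⟩ heq
    rw [main w μ σ h1, hLmin] at heq
    have hu : 0 < μ ^ 2 + σ ^ 2 := by positivity
    have t1 : 0 ≤ (w * (1 - σ) * (μ ^ 2 + σ ^ 2) - x * μ) ^ 2 / (γ * (μ ^ 2 + σ ^ 2)) := by
      positivity
    have t2 : 0 ≤ x ^ 2 * (σ - σstar * (μ ^ 2 + σ ^ 2)) ^ 2 / (γ * (μ ^ 2 + σ ^ 2)) := by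
      positivity
    have t3 : Real.log (σ / σstar) ≤ σ / σstar - 1 :=
      Real.log_le_sub_one_of_pos (by positivity)
    have z1 : (w * (1 - σ) * (μ ^ 2 + σ ^ 2) - x * μ) ^ 2 / (γ * (μ ^ 2 + σ ^ 2)) = 0 := by
      linarith
    have z2 : x ^ 2 * (σ - σstar * (μ ^ 2 + σ ^ 2)) ^ 2 / (γ * (μ ^ 2 + σ ^ 2)) = 0 := by
      linarith
    have z3 : σ / σstar - 1 - Real.log (σ / σstar) = 0 := by linarith
    -- from z3 : σ = σstar
    have ht : σ / σstar = 1 := by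
      by_contra hne
      have := Real.log_lt_sub_one_of_pos (show (0:ℝ) < σ / σstar by positivity) hne
      linarith
    have hσeq : σ = σstar := by
      field_simp at ht; exact ht
    -- from z2 : μ^2 + σ^2 = 1
    have hden : γ * (μ ^ 2 + σ ^ 2) ≠ 0 := by positivity
    have hn2 : σ - σstar * (μ ^ 2 + σ ^ 2) = 0 := by
      have h := (div_eq_zero_iff.mp z2).resolve_right hden
      rcases mul_eq_zero.mp h with h' | h'
      · exact absurd h' (by positivity)
      · exact pow_eq_zero_iff (by norm_num) |>.mp h'
    have huu : μ ^ 2 + σ ^ 2 = 1 := by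
      rw [hσeq] at hn2 ⊢
      have h2 : σstar * (1 - (μ ^ 2 + σstar ^ 2)) = 0 := by linear_combination hn2
      rcases mul_eq_zero.mp h2 with h | h
      · exact absurd h hσ0.ne'
      · linarith
    have hμ2 : μ ^ 2 = μstar ^ 2 := by
      rw [hσeq] at huu; linear_combination huu - hu1'
    have hn1 : w * (1 - σ) * (μ ^ 2 + σ ^ 2) - x * μ = 0 := by
      have h := (div_eq_zero_iff.mp z1).resolve_right hden
      exact pow_eq_zero_iff (by norm_num) |>.mp h
    rw [huu, mul_one, hσeq] at hn1
    clear heq t1 t2 t3 z1 z2 z3 main hL ht hn2 huu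
    -- hn1 : w * (1 - σstar) - x * μ = 0
    have hcase : μ = μstar ∨ μ = -μstar := by
      have : (μ - μstar) * (μ + μstar) = 0 := by linear_combination hμ2
      rcases mul_eq_zero.mp this with h | h
      · left; linarith
      · right; linarith
    rcases hcase with hμc | hμc
    · left
      refine ⟨?_, hμc, hσeq⟩
      have : w * (1 - σstar) = wstar * (1 - σstar) := by
        rw [hws']; rw [hμc] at hn1; linear_combination hn1
      have := mul_right_cancel₀ h1σ.ne' this
      exact this
    · right
      refine ⟨?_, hμc, hσeq⟩
      have : w * (1 - σstar) = -wstar * (1 - σstar) := by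
        rw [hμc] at hn1; linear_combination hn1 + hws'
      exact mul_right_cancel₀ h1σ.ne' this
end
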